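/- arXiv:math/9809060 — 3 statements merged into one kernel-verified Lean document; each statement's English description precedes it below -/
import Mathlib

section
/- Let Q_k = {x ∈ ℝ^k : x_1 ≥ 0, …, x_k ≥ 0} be the closed first quadrant in ℝ^k and let n ∈ ℤ. Then the function n·𝟏_{Q_k} : ℝ^k → ℤ (equal to n on Q_k and 0 elsewhere) is a sum of signs if and only if 2^k divides n. -/
/-- The integer-valued sign of a real number. -/
noncomputable def sgn (r : ℝ) : ℤ := if r < 0 then -1 else if 0 < r then 1 else 0

/-- A function `φ : ℝ^n → ℤ` is a sum of signs if it is a finite sum of signs of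
polynomials. -/
def IsSumOfSigns {n : ℕ} (φ : (Fin n → ℝ) → ℤ) : Prop :=
  ∃ (s : ℕ) (g : Fin s → MvPolynomial (Fin n) ℝ),
    ∀ x, φ x = ∑ i : Fin s, sgn (MvPolynomial.eval x (g i))

/-!
Near `t = 0` a real polynomial behaves like its lowest-order term `c t^m`, so
`sgn p(t) + sgn p(-t)` is eventually `2 sgn c` if `m` is even and `0` otherwise. Applied in the
first coordinate to a sum of signs `φ` on `ℝ^(k+1)`, this shows that
`x ↦ φ(t, x) + φ(-t, x)` (for small `t > 0`) is twice a sum of signs `ψ` on `ℝ^k`, because the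
parity and sign of the lowest nonvanishing coefficient are themselves sums of signs in the
coefficients. For `φ = n 𝟏_{Q_(k+1)}` this sum is `n 𝟏_{Q_k}`, so `n = 2 ψ(0)` is even and
`(n / 2) 𝟏_{Q_k} = ψ`; induction gives `2^k ∣ n`. Conversely
`2 · 𝟏_{x ≥ 0} = (1 + sgn x) + (1 - sgn x²)`, and products of sums of signs are sums of signs.
-/

open MvPolynomial Filter Topology Finset

lemma sgn_eq_sign (r : ℝ) : sgn r = SignType.sign r := by
  rcases lt_trichotomy r 0 with h | rfl | h
  · simp [sgn, h]
  · simp [sgn]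
  · simp [sgn, h, h.not_gt]

lemma ite_eq_zero_eq_one_sub_sgn_sq (r : ℝ) : (if r = 0 then 1 else 0 : ℤ) = 1 - sgn (r ^ 2) := by
  rcases eq_or_ne r 0 with rfl | h
  · simp [sgn]
  · simp [h, sgn_eq_sign, sign_pos (sq_pos_of_ne_zero h)]

lemma ite_nonneg_eq_one_add_sgn_add_ite_eq_zero (r : ℝ) :
    (if 0 ≤ r then 2 else 0 : ℤ) = 1 + sgn r + if r = 0 then 1 else 0 := by
  rcases lt_trichotomy r 0 with h | rfl | h
  · simp [sgn, h, h.not_ge, h.ne]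
  · simp [sgn]
  · simp [sgn, h, h.le, h.ne', h.not_gt]

lemma isSumOfSigns_iff_exists_fintype {n : ℕ} {φ : (Fin n → ℝ) → ℤ} :
    IsSumOfSigns φ ↔ ∃ (ι : Type) (_ : Fintype ι) (g : ι → MvPolynomial (Fin n) ℝ),
      ∀ x, φ x = ∑ i, sgn (eval x (g i)) := by
  refine ⟨fun ⟨s, g, hg⟩ => ⟨Fin s, inferInstance, g, hg⟩, fun ⟨ι, _, g, hg⟩ => ?_⟩
  let e := Fintype.equivFin ι
  exact ⟨Fintype.card ι, g ∘ e.symm, fun x => (hg x).trans (e.symm.sum_comp _).symm⟩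

def sumsOfSigns (n : ℕ) : Subring ((Fin n → ℝ) → ℤ) where
  carrier := {φ | IsSumOfSigns φ}
  zero_mem' := ⟨0, Fin.elim0, fun _ => rfl⟩
  one_mem' := ⟨1, fun _ => 1, fun _ => by simp [sgn]⟩
  add_mem' := by
    rintro φ ψ ⟨s, g, hg⟩ ⟨t, h, hh⟩
    refine isSumOfSigns_iff_exists_fintype.2
      ⟨Fin s ⊕ Fin t, inferInstance, Sum.elim g h, fun x => ?_⟩
    simp [Fintype.sum_sum_type, hg, hh]
  neg_mem' := by
    rintro φ ⟨s, g, hg⟩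
    exact ⟨s, fun i => -g i, fun x => by simp [hg, sgn_eq_sign, Left.sign_neg]⟩
  mul_mem' := by
    rintro φ ψ ⟨s, g, hg⟩ ⟨t, h, hh⟩
    refine isSumOfSigns_iff_exists_fintype.2
      ⟨Fin s × Fin t, inferInstance, fun p => g p.1 * h p.2, fun x => ?_⟩
    simp [hg, hh, Fintype.sum_mul_sum, Fintype.sum_prod_type, sgn_eq_sign, sign_mul]

namespace sumsOfSigns

variable {n : ℕ}

lemma mem_iff {φ : (Fin n → ℝ) → ℤ} : φ ∈ sumsOfSigns n ↔ IsSumOfSigns φ := Iff.rfl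

lemma sgn_eval_mem (g : MvPolynomial (Fin n) ℝ) :
    (fun x => sgn (eval x g)) ∈ sumsOfSigns n :=
  ⟨1, fun _ => g, fun _ => by simp⟩

lemma ite_eval_eq_zero_mem (g : MvPolynomial (Fin n) ℝ) :
    (fun x => if eval x g = 0 then 1 else 0) ∈ sumsOfSigns n := by
  have h : (fun x => if eval x g = 0 then 1 else 0) = 1 - fun x => sgn (eval x (g ^ 2)) := by
    ext x
    simp [ite_eq_zero_eq_one_sub_sgn_sq]
  rw [h]
  exact sub_mem (one_mem _) (sgn_eval_mem _)

lemma ite_nonneg_mem (i : Fin n) :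
    (fun x : Fin n → ℝ => if 0 ≤ x i then 2 else 0) ∈ sumsOfSigns n := by
  have h : (fun x : Fin n → ℝ => if 0 ≤ x i then 2 else 0) =
      1 + (fun x => sgn (eval x (X i))) + fun x => if eval x (X i) = 0 then 1 else 0 := by
    ext x
    simp [ite_nonneg_eq_one_add_sgn_add_ite_eq_zero]
  rw [h]
  exact add_mem (add_mem (one_mem _) (sgn_eval_mem _)) (ite_eval_eq_zero_mem _)

end sumsOfSigns

lemma isSumOfSigns_quadrant_two_pow_mul (k : ℕ) (m : ℤ) :
    IsSumOfSigns (fun x : Fin k → ℝ => if ∀ i, 0 ≤ x i then 2 ^ k * m else 0) := by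
  have h : (fun x : Fin k → ℝ => if ∀ i, 0 ≤ x i then 2 ^ k * m else 0) =
      (m : (Fin k → ℝ) → ℤ) * ∏ i, fun x => if 0 ≤ x i then 2 else 0 := by
    ext x
    simp [Finset.prod_apply, Finset.prod_ite_zero, mul_comm]
  rw [← sumsOfSigns.mem_iff, h]
  exact mul_mem (intCast_mem _ m) (prod_mem fun i _ => sumsOfSigns.ite_nonneg_mem i)

namespace Polynomial

lemma eventually_sgn_eval_eq (p : ℝ[X]) :
    ∀ᶠ t in 𝓝 0, sgn (p.eval t) = sgn (t ^ p.natTrailingDegree * p.trailingCoeff) := by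
  rcases eq_or_ne p 0 with rfl | hp
  · simp
  set m := p.natTrailingDegree
  obtain ⟨q, hq⟩ : X ^ m ∣ p :=
    X_pow_dvd_iff.2 fun d hd => coeff_eq_zero_of_lt_natTrailingDegree hd
  have hq0 : q.eval 0 = p.trailingCoeff := by
    rw [← coeff_zero_eq_eval_zero, ← coeff_X_pow_mul q m 0, zero_add, ← hq]
    rfl
  have hsign : ContinuousAt (fun t => SignType.sign (q.eval t)) 0 :=
    (continuousAt_sign_of_ne_zero (hq0 ▸ trailingCoeff_nonzero_iff_nonzero.2 hp)).comp
      q.continuousAt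
  rw [ContinuousAt, nhds_discrete SignType, tendsto_pure] at hsign
  filter_upwards [hsign] with t ht
  have heval : p.eval t = t ^ m * q.eval t := by rw [hq, eval_mul, eval_pow, eval_X]
  rw [heval, sgn_eq_sign, sgn_eq_sign, sign_mul, sign_mul, ht, hq0]

lemma eventually_sgn_eval_add_sgn_eval_neg (p : ℝ[X]) :
    ∀ᶠ t in 𝓝[>] 0, sgn (p.eval t) + sgn (p.eval (-t)) =
      2 * if Even p.natTrailingDegree then sgn p.trailingCoeff else 0 := by
  have hneg : Tendsto (fun t : ℝ => -t) (𝓝 0) (𝓝 0) := by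
    simpa using continuous_neg.tendsto (0 : ℝ)
  filter_upwards [nhdsWithin_le_nhds p.eventually_sgn_eval_eq,
    nhdsWithin_le_nhds (hneg.eventually p.eventually_sgn_eval_eq), self_mem_nhdsWithin]
    with t ht_eval hnegt_eval (ht : 0 < t)
  rw [ht_eval, hnegt_eval]
  simp only [sgn_eq_sign, sign_mul, sign_pow, sign_pos ht, Left.sign_neg]
  rcases Nat.even_or_odd p.natTrailingDegree with h | h
  · simp only [one_pow, one_mul, h.neg_pow, h, ↓reduceIte]
    ring
  · simp [h.neg_pow, Nat.not_even_iff_odd.2 h]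

lemma sum_even_sgn_coeff_mul_prod_eq (p : ℝ[X]) {d : ℕ} (hd : p.natDegree ≤ d) :
    ∑ j ∈ (range (d + 1)).filter Even,
        sgn (p.coeff j) * ∏ l ∈ range j, (if p.coeff l = 0 then 1 else 0) =
      if Even p.natTrailingDegree then sgn p.trailingCoeff else 0 := by
  rcases eq_or_ne p 0 with rfl | hp
  · simp [sgn]
  have hm : p.natTrailingDegree ∈ range (d + 1) :=
    mem_range.2 (Nat.lt_succ_of_le (p.natTrailingDegree_le_natDegree.trans hd))
  rw [sum_filter, sum_eq_single_of_mem _ hm]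
  · rw [prod_eq_one fun l hl => if_pos (coeff_eq_zero_of_lt_natTrailingDegree (mem_range.1 hl)),
      mul_one]
    rfl
  · intro j _ hj
    rcases hj.lt_or_gt with h | h
    · simp [coeff_eq_zero_of_lt_natTrailingDegree h, sgn]
    · rw [prod_eq_zero (mem_range.2 h) (if_neg (trailingCoeff_nonzero_iff_nonzero.2 hp))]
      simp

end Polynomial

lemma IsSumOfSigns.exists_eventually_add_neg_eq_two_mul {k : ℕ} {φ : (Fin (k + 1) → ℝ) → ℤ}
    (hφ : IsSumOfSigns φ) :
    ∃ ψ : (Fin k → ℝ) → ℤ, IsSumOfSigns ψ ∧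
      ∀ x, ∀ᶠ t in 𝓝[>] 0, φ (Fin.cons t x) + φ (Fin.cons (-t) x) = 2 * ψ x := by
  obtain ⟨s, g, hg⟩ := hφ
  let G i := finSuccEquiv ℝ k (g i)
  let d := univ.sup fun i => (G i).natDegree
  let ψ : (Fin k → ℝ) → ℤ := ∑ i, ∑ j ∈ (range (d + 1)).filter Even,
    (fun x => sgn (eval x ((G i).coeff j))) *
      ∏ l ∈ range j, fun x => if eval x ((G i).coeff l) = 0 then 1 else 0
  refine ⟨ψ, sum_mem fun i _ => sum_mem fun j _ => mul_mem (sumsOfSigns.sgn_eval_mem _)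
    (prod_mem fun l _ => sumsOfSigns.ite_eval_eq_zero_mem _), fun x => ?_⟩
  let p i := (G i).map (eval x)
  have hφ_cons (y : ℝ) : φ (Fin.cons y x) = ∑ i, sgn ((p i).eval y) := by
    simp only [hg, eval_eq_eval_mv_eval', p, G]
  have hψ : ψ x = ∑ i, if Even (p i).natTrailingDegree then sgn (p i).trailingCoeff else 0 := by
    refine (Finset.sum_apply _ _ _).trans (sum_congr rfl fun i _ => ?_)
    have hdeg : (p i).natDegree ≤ d :=
      Polynomial.natDegree_map_le.trans (le_sup (f := fun i => (G i).natDegree) (mem_univ i))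
    rw [← (p i).sum_even_sgn_coeff_mul_prod_eq hdeg]
    simp [Finset.sum_apply, Finset.prod_apply, p, Polynomial.coeff_map]
  filter_upwards [eventually_all.2 fun i => (p i).eventually_sgn_eval_add_sgn_eval_neg] with t ht
  rw [hφ_cons, hφ_cons, ← sum_add_distrib, hψ, mul_sum]
  exact sum_congr rfl fun i _ => ht i

lemma dvd_of_isSumOfSigns_quadrant : ∀ {k : ℕ} {n : ℤ},
    IsSumOfSigns (fun x : Fin k → ℝ => if ∀ i, 0 ≤ x i then n else 0) → 2 ^ k ∣ n
  | 0, n, _ => by simp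
  | k + 1, n, h => by
    obtain ⟨ψ, hψ, hlim⟩ := h.exists_eventually_add_neg_eq_two_mul
    have hquad (x : Fin k → ℝ) : (if ∀ i, 0 ≤ x i then n else 0) = 2 * ψ x := by
      obtain ⟨t, ht, ht_pos : 0 < t⟩ := ((hlim x).and self_mem_nhdsWithin).exists
      simpa [Fin.forall_fin_succ, ht_pos.le, ht_pos.not_ge] using ht
    obtain ⟨m, rfl⟩ : 2 ∣ n := ⟨ψ 0, by simpa using hquad 0⟩
    have hm : IsSumOfSigns (fun x : Fin k → ℝ => if ∀ i, 0 ≤ x i then m else 0) := by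
      convert hψ using 2 with x
      have := hquad x
      split_ifs at this ⊢ <;> omega
    rw [pow_succ']
    exact mul_dvd_mul_left 2 (dvd_of_isSumOfSigns_quadrant hm)

theorem sumOfSigns_closed_quadrant_iff (k : ℕ) (n : ℤ) :
    IsSumOfSigns (fun x : Fin k → ℝ => if ∀ i, 0 ≤ x i then n else 0) ↔
      (2 : ℤ) ^ k ∣ n := by
  refine ⟨dvd_of_isSumOfSigns_quadrant, ?_⟩
  rintro ⟨m, rfl⟩
  exact isSumOfSigns_quadrant_two_pow_mul k m
end

section
/- For every polynomial P ∈ ℚ[t] that preserves formal sums of signs, there exist a polynomial Q ∈ ℤ[t] and a polynomial R ∈ ℚ[t] preserving formal sums of signs such that R(m) is divisible by 4 for every integer m and P = Q + R. -/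
open Polynomial

/-- A polynomial `P ∈ ℚ[t]` preserves formal sums of signs if for every `s ≥ 0` there is
a polynomial `Q` with integer coefficients in `s` variables such that
`P(X_1 + ⋯ + X_s) − Q` lies in the ideal generated by the `X_i^3 − X_i`. -/
def PreservesSumsOfSigns (P : Polynomial ℚ) : Prop :=
  ∀ s : ℕ, ∃ Q : MvPolynomial (Fin s) ℤ,
    Polynomial.aeval (∑ i : Fin s, MvPolynomial.X i) P
        - MvPolynomial.map (Int.castRingHom ℚ) Q ∈
      Ideal.span (Set.range fun i : Fin s => MvPolynomial.X i ^ 3 - MvPolynomial.X i)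

/-!
Substituting a sign `c ∈ {0, 1, -1}` for one of the variables turns `P(X₁ + ⋯ + Xₛ₊₁)` into
`P(c + X₁ + ⋯ + Xₛ)`, and halves of the resulting combinations stay integral modulo the relations
`Xᵢ³ = Xᵢ` (an integer polynomial `p` in the substituted variable satisfies `2 ∣ p(1) - p(-1)` and
`2 ∣ p(1) + p(-1) - 2p(0)`). Hence the polynomials preserving formal sums of signs are closed under
`D₁P(t) = (P(t+1) - P(t-1))/2` and `D₂P(t) = (P(t+1) + P(t-1))/2 - P(t)`, and take integer values
at `0`. As `Δ = D₁ + D₂` and `Δ² = 2 (D₂² + D₂ + D₁D₂)`, the forward differences `ΔⁿP(0)` are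
integers, divisible by `2` for `n ≥ 2` and by `4` for `n ≥ 4`. Subtracting an integer cubic that
matches `ΔⁿP(0)` modulo `4` for `n ≤ 3` leaves a polynomial all of whose forward differences at
`0` are divisible by `4`, hence so are all its values at integers.
-/

open scoped fwdDiff

section SignSubstitution

variable {R : Type*} [CommRing R] {s : ℕ}

noncomputable def signIdeal (R : Type*) [CommRing R] (s : ℕ) : Ideal (MvPolynomial (Fin s) R) :=
  Ideal.span (Set.range fun i : Fin s => MvPolynomial.X i ^ 3 - MvPolynomial.X i)

noncomputable def signSubst (c : R) : MvPolynomial (Fin (s + 1)) R →ₐ[R] MvPolynomial (Fin s) R :=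
  MvPolynomial.aeval (Fin.cases (MvPolynomial.C c) MvPolynomial.X)

@[simp] lemma signSubst_X_zero (c : R) :
    signSubst c (MvPolynomial.X (0 : Fin (s + 1))) = MvPolynomial.C c := by
  simp [signSubst]

@[simp] lemma signSubst_X_succ (c : R) (i : Fin s) :
    signSubst c (MvPolynomial.X i.succ) = MvPolynomial.X i := by
  simp [signSubst]

lemma signSubst_aeval_sum_X (c : R) (P : R[X]) :
    signSubst c (aeval (∑ i : Fin (s + 1), MvPolynomial.X i) P) =
      aeval (∑ i : Fin s, MvPolynomial.X i) (taylor c P) := by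
  rw [← aeval_algHom_apply, taylor_apply, aeval_comp]
  simp [Fin.sum_univ_succ, add_comm, MvPolynomial.algebraMap_eq]

lemma signSubst_mem_signIdeal {c : R} (hc : c ^ 3 = c) {J : MvPolynomial (Fin (s + 1)) R}
    (hJ : J ∈ signIdeal R (s + 1)) : signSubst c J ∈ signIdeal R s := by
  refine (Ideal.span_le (I := (signIdeal R s).comap (signSubst c))).2 ?_ hJ
  rintro _ ⟨i, rfl⟩
  induction i using Fin.cases with
  | zero =>
    simp only [SetLike.mem_coe, Ideal.mem_comap, map_sub, map_pow, signSubst_X_zero]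
    rw [← map_pow, ← map_sub, hc, sub_self, map_zero]
    exact (signIdeal R s).zero_mem
  | succ i => exact Ideal.subset_span ⟨i, by simp⟩

lemma map_signSubst {S : Type*} [CommRing S] (f : R →+* S) (c : R)
    (Q : MvPolynomial (Fin (s + 1)) R) :
    MvPolynomial.map f (signSubst c Q) = signSubst (f c) (MvPolynomial.map f Q) := by
  induction Q using MvPolynomial.induction_on with
  | C a => simp
  | add p q hp hq => simp [hp, hq]
  | mul_X p i hp =>
    induction i using Fin.cases with
    | zero => simp [hp]
    | succ i => simp [hp]

lemma signSubst_eq_eval_finSuccEquiv (c : R) (Q : MvPolynomial (Fin (s + 1)) R) :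
    signSubst c Q = (MvPolynomial.finSuccEquiv R s Q).eval (MvPolynomial.C c) := by
  induction Q using MvPolynomial.induction_on with
  | C a => simp [MvPolynomial.finSuccEquiv_apply]
  | add p q hp hq => simp [hp, hq]
  | mul_X p i hp =>
    induction i using Fin.cases with
    | zero => simp [hp, MvPolynomial.finSuccEquiv_X_zero]
    | succ i => simp [hp, MvPolynomial.finSuccEquiv_X_succ]

lemma two_dvd_signSubst_one_sub_signSubst_neg_one (Q : MvPolynomial (Fin (s + 1)) R) :
    2 ∣ signSubst 1 Q - signSubst (-1) Q := by
  simpa [signSubst_eq_eval_finSuccEquiv, one_add_one_eq_two] using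
    Polynomial.sub_dvd_eval_sub 1 (-1) (MvPolynomial.finSuccEquiv R s Q)

lemma two_dvd_signSubst_one_add_signSubst_neg_one_sub_two_mul (Q : MvPolynomial (Fin (s + 1)) R) :
    2 ∣ signSubst 1 Q + signSubst (-1) Q - 2 * signSubst 0 Q := by
  have key (p : (MvPolynomial (Fin s) R)[X]) : 2 ∣ p.eval 1 + p.eval (-1) - 2 * p.eval 0 := by
    rw [← divX_mul_X_add p]
    convert Polynomial.sub_dvd_eval_sub 1 (-1) p.divX using 1
    · norm_num
    · simp only [eval_add, eval_mul, eval_X, eval_C]; ring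
  simpa [signSubst_eq_eval_finSuccEquiv] using key (MvPolynomial.finSuccEquiv R s Q)

end SignSubstitution

section IntegralModSigns

variable {s t : ℕ}

noncomputable def integralModSigns (s : ℕ) : AddSubgroup (MvPolynomial (Fin s) ℚ) :=
  (MvPolynomial.map (Int.castRingHom ℚ)).range.toAddSubgroup ⊔ (signIdeal ℚ s).toAddSubgroup

lemma mem_integralModSigns_iff {F : MvPolynomial (Fin s) ℚ} :
    F ∈ integralModSigns s ↔
      ∃ Q : MvPolynomial (Fin s) ℤ, F - MvPolynomial.map (Int.castRingHom ℚ) Q ∈ signIdeal ℚ s := by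
  simp only [integralModSigns, AddSubgroup.mem_sup]
  constructor
  · rintro ⟨_, ⟨Q, rfl⟩, J, hJ, rfl⟩
    exact ⟨Q, by simpa using hJ⟩
  · rintro ⟨Q, hQ⟩
    exact ⟨_, ⟨Q, rfl⟩, _, hQ, add_sub_cancel _ _⟩

lemma map_mem_integralModSigns (L : MvPolynomial (Fin s) ℚ →+ MvPolynomial (Fin t) ℚ)
    (hI : ∀ J ∈ signIdeal ℚ s, L J ∈ signIdeal ℚ t)
    (hZ : ∀ Q, ∃ T, L (MvPolynomial.map (Int.castRingHom ℚ) Q) =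
      MvPolynomial.map (Int.castRingHom ℚ) T)
    {F : MvPolynomial (Fin s) ℚ} (hF : F ∈ integralModSigns s) : L F ∈ integralModSigns t := by
  obtain ⟨_, ⟨Q, rfl⟩, J, hJ, rfl⟩ := AddSubgroup.mem_sup.1 hF
  obtain ⟨T, hT⟩ := hZ Q
  rw [map_add, hT]
  exact AddSubgroup.add_mem_sup ⟨T, rfl⟩ (hI J hJ)

lemma half_signSubst_sub_mem_integralModSigns {F : MvPolynomial (Fin (s + 1)) ℚ}
    (hF : F ∈ integralModSigns (s + 1)) :
    (2 : ℚ)⁻¹ • (signSubst 1 F - signSubst (-1) F) ∈ integralModSigns s := by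
  refine map_mem_integralModSigns ((2 : ℚ)⁻¹ • ((signSubst (s := s) (1 : ℚ)).toLinearMap -
    (signSubst (s := s) (-1 : ℚ)).toLinearMap)).toAddMonoidHom (fun J hJ => ?_) (fun Q => ?_) hF
    <;> simp only [LinearMap.toAddMonoidHom_coe, LinearMap.smul_apply, LinearMap.sub_apply,
      AlgHom.toLinearMap_apply]
  · exact Submodule.smul_of_tower_mem _ _ (sub_mem (signSubst_mem_signIdeal (by norm_num) hJ)
      (signSubst_mem_signIdeal (by norm_num) hJ))
  · obtain ⟨T, hT⟩ := two_dvd_signSubst_one_sub_signSubst_neg_one Q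
    refine ⟨T, ?_⟩
    have := congrArg (MvPolynomial.map (Int.castRingHom ℚ)) hT
    simp only [two_mul, map_sub, map_add, map_signSubst, map_one, map_neg] at this
    linear_combination (norm := module) (2 : ℚ)⁻¹ • this

lemma half_signSubst_add_sub_mem_integralModSigns {F : MvPolynomial (Fin (s + 1)) ℚ}
    (hF : F ∈ integralModSigns (s + 1)) :
    (2 : ℚ)⁻¹ • (signSubst 1 F + signSubst (-1) F) - signSubst 0 F ∈ integralModSigns s := by
  refine map_mem_integralModSigns ((2 : ℚ)⁻¹ • ((signSubst (s := s) (1 : ℚ)).toLinearMap +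
    (signSubst (s := s) (-1 : ℚ)).toLinearMap) - (signSubst (s := s) (0 : ℚ)).toLinearMap
    ).toAddMonoidHom (fun J hJ => ?_) (fun Q => ?_) hF
    <;> simp only [LinearMap.toAddMonoidHom_coe, LinearMap.smul_apply, LinearMap.sub_apply,
      LinearMap.add_apply, AlgHom.toLinearMap_apply]
  · exact sub_mem (Submodule.smul_of_tower_mem _ _ (add_mem
      (signSubst_mem_signIdeal (by norm_num) hJ) (signSubst_mem_signIdeal (by norm_num) hJ)))
      (signSubst_mem_signIdeal (by norm_num) hJ)
  · obtain ⟨T, hT⟩ := two_dvd_signSubst_one_add_signSubst_neg_one_sub_two_mul Q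
    refine ⟨T, ?_⟩
    have := congrArg (MvPolynomial.map (Int.castRingHom ℚ)) hT
    simp only [two_mul, map_sub, map_add, map_signSubst, map_one, map_neg, map_zero] at this
    linear_combination (norm := module) (2 : ℚ)⁻¹ • this

end IntegralModSigns

lemma preservesSumsOfSigns_iff {P : ℚ[X]} :
    PreservesSumsOfSigns P ↔
      ∀ s, aeval (∑ i : Fin s, MvPolynomial.X i) P ∈ integralModSigns s := by
  simp only [mem_integralModSigns_iff]
  rfl

lemma preservesSumsOfSigns_map_intCast (Q : ℤ[X]) :
    PreservesSumsOfSigns (Q.map (Int.castRingHom ℚ)) := fun s => by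
  refine ⟨aeval (∑ i : Fin s, MvPolynomial.X i) Q, ?_⟩
  rw [map_aeval_eq_aeval_map (ψ := MvPolynomial.map (Int.castRingHom ℚ))
    (φ := Int.castRingHom ℚ) (RingHom.ext_int _ _)]
  simp

noncomputable def meanCentralDiff (P : ℚ[X]) : ℚ[X] := (2 : ℚ)⁻¹ • (taylor 1 P - taylor (-1) P)

noncomputable def halfSecondCentralDiff (P : ℚ[X]) : ℚ[X] :=
  (2 : ℚ)⁻¹ • (taylor 1 P + taylor (-1) P) - P

namespace PreservesSumsOfSigns

variable {P P' : ℚ[X]}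

lemma add (hP : PreservesSumsOfSigns P) (hP' : PreservesSumsOfSigns P') :
    PreservesSumsOfSigns (P + P') := by
  rw [preservesSumsOfSigns_iff] at *
  intro s
  rw [map_add]
  exact add_mem (hP s) (hP' s)

lemma sub (hP : PreservesSumsOfSigns P) (hP' : PreservesSumsOfSigns P') :
    PreservesSumsOfSigns (P - P') := by
  rw [preservesSumsOfSigns_iff] at *
  intro s
  rw [map_sub]
  exact sub_mem (hP s) (hP' s)

lemma meanCentralDiff (hP : PreservesSumsOfSigns P) :
    PreservesSumsOfSigns (meanCentralDiff P) := by
  rw [preservesSumsOfSigns_iff] at *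
  intro s
  convert half_signSubst_sub_mem_integralModSigns (hP (s + 1)) using 1
  simp [_root_.meanCentralDiff, signSubst_aeval_sum_X]

lemma halfSecondCentralDiff (hP : PreservesSumsOfSigns P) :
    PreservesSumsOfSigns (halfSecondCentralDiff P) := by
  rw [preservesSumsOfSigns_iff] at *
  intro s
  convert half_signSubst_add_sub_mem_integralModSigns (hP (s + 1)) using 1
  simp [_root_.halfSecondCentralDiff, signSubst_aeval_sum_X]

lemma exists_eval_zero_eq_intCast (hP : PreservesSumsOfSigns P) : ∃ k : ℤ, P.eval 0 = k := by
  obtain ⟨Q, hQ⟩ := hP 0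
  simp only [Finset.univ_eq_empty, Finset.sum_empty, Set.range_eq_empty, Ideal.span_empty,
    Submodule.mem_bot, sub_eq_zero] at hQ
  refine ⟨MvPolynomial.constantCoeff Q, ?_⟩
  simpa [← coeff_zero_eq_aeval_zero', coeff_zero_eq_eval_zero, MvPolynomial.constantCoeff_map]
    using congrArg MvPolynomial.constantCoeff hQ

lemma exists_fwdDiff_eval_eq (hP : PreservesSumsOfSigns P) :
    ∃ P', PreservesSumsOfSigns P' ∧ Δ_[1] P.eval = P'.eval := by
  refine ⟨_, hP.meanCentralDiff.add hP.halfSecondCentralDiff, funext fun x => ?_⟩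
  simp [fwdDiff, _root_.meanCentralDiff, _root_.halfSecondCentralDiff, taylor_eval]
  ring

lemma exists_fwdDiff_iter_eval_eq (hP : PreservesSumsOfSigns P) (n : ℕ) :
    ∃ P', PreservesSumsOfSigns P' ∧ Δ_[1] ^[n] P.eval = P'.eval := by
  induction n with
  | zero => exact ⟨P, hP, rfl⟩
  | succ n ih =>
    obtain ⟨P', hP', h⟩ := ih
    obtain ⟨P'', hP'', h'⟩ := hP'.exists_fwdDiff_eval_eq
    exact ⟨P'', hP'', by rw [Function.iterate_succ_apply', h, h']⟩

lemma exists_fwdDiff_iter_two_eval_eq_two_smul (hP : PreservesSumsOfSigns P) :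
    ∃ U, PreservesSumsOfSigns U ∧ Δ_[1] ^[2] P.eval = (2 : ℚ) • U.eval := by
  refine ⟨_, (hP.halfSecondCentralDiff.halfSecondCentralDiff.add hP.halfSecondCentralDiff).add
    hP.halfSecondCentralDiff.meanCentralDiff, funext fun x => ?_⟩
  simp [fwdDiff, _root_.meanCentralDiff, _root_.halfSecondCentralDiff, taylor_eval]
  ring_nf

lemma fwdDiff_iter_eval_zero_mem_zmultiples (hP : PreservesSumsOfSigns P) (n k : ℕ) :
    Δ_[1] ^[n + 2 * k] P.eval 0 ∈ AddSubgroup.zmultiples ((2 : ℚ) ^ k) := by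
  induction k generalizing P with
  | zero =>
    obtain ⟨P', hP', h⟩ := hP.exists_fwdDiff_iter_eval_eq n
    obtain ⟨m, hm⟩ := hP'.exists_eval_zero_eq_intCast
    exact ⟨m, by simp [h, hm]⟩
  | succ k ih =>
    obtain ⟨U, hU, h⟩ := hP.exists_fwdDiff_iter_two_eval_eq_two_smul
    obtain ⟨m, hm⟩ := ih hU
    refine ⟨m, ?_⟩
    rw [show n + 2 * (k + 1) = n + 2 * k + 2 by ring, Function.iterate_add_apply, h,
      fwdDiff_iter_const_smul, Pi.smul_apply, ← hm, pow_succ]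
    simp only [zsmul_eq_mul, smul_eq_mul]
    ring

end PreservesSumsOfSigns

section NewtonSeries

variable {R : Type*} [CommRing R] (S : AddSubgroup R) (P : R[X])

lemma forall_fwdDiff_iter_eval_add_one_mem_iff (y : R) :
    (∀ n, Δ_[1] ^[n] P.eval (y + 1) ∈ S) ↔ ∀ n, Δ_[1] ^[n] P.eval y ∈ S := by
  have step (n : ℕ) :
      Δ_[1] ^[n] P.eval (y + 1) = Δ_[1] ^[n] P.eval y + Δ_[1] ^[n + 1] P.eval y := by
    rw [Function.iterate_succ_apply', fwdDiff]
    abel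
  refine ⟨fun h => ?_, fun h n => step n ▸ add_mem (h n) (h (n + 1))⟩
  -- descending induction on `n`, starting above the degree where the differences vanish
  suffices ∀ k n, P.natDegree < n + k → Δ_[1] ^[n] P.eval y ∈ S from
    fun n => this (P.natDegree + 1) n (by omega)
  intro k
  induction k with
  | zero =>
    intro n hn
    rw [fwdDiff_iter_eq_zero_of_degree_lt (by simpa using hn)]
    exact S.zero_mem
  | succ k ih =>
    intro n hn
    rw [eq_sub_of_add_eq (step n).symm]
    exact sub_mem (h n) (ih (n + 1) (by omega))

lemma eval_intCast_mem_of_fwdDiff_iter_mem (h : ∀ n, Δ_[1] ^[n] P.eval 0 ∈ S) (m : ℤ) :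
    P.eval (m : R) ∈ S := by
  suffices ∀ n, Δ_[1] ^[n] P.eval (m : R) ∈ S from this 0
  induction m using Int.induction_on with
  | zero => simpa using h
  | succ m ih =>
    push_cast at ih ⊢
    exact (forall_fwdDiff_iter_eval_add_one_mem_iff S P _).2 ih
  | pred m ih =>
    refine (forall_fwdDiff_iter_eval_add_one_mem_iff S P _).1 ?_
    push_cast at ih ⊢
    simpa using ih

end NewtonSeries

lemma PreservesSumsOfSigns.exists_fwdDiff_iter_sub_mem_zmultiples_four {P : ℚ[X]}
    (hP : PreservesSumsOfSigns P) : ∃ Q : ℤ[X], ∀ n,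
      Δ_[1] ^[n] (P - Q.map (Int.castRingHom ℚ)).eval 0 ∈ AddSubgroup.zmultiples (4 : ℚ) := by
  obtain ⟨a₀, ha₀⟩ := hP.fwdDiff_iter_eval_zero_mem_zmultiples 0 0
  obtain ⟨a₁, ha₁⟩ := hP.fwdDiff_iter_eval_zero_mem_zmultiples 1 0
  obtain ⟨u, hu⟩ := hP.fwdDiff_iter_eval_zero_mem_zmultiples 0 1
  obtain ⟨v, hv⟩ := hP.fwdDiff_iter_eval_zero_mem_zmultiples 1 1
  -- the forward differences of `Q` at `0` are `a₀, a₁, 2u, 6v, 0, …`, and `6v ≡ 2v [ZMOD 4]`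
  set Q : ℤ[X] := C a₀ + C a₁ * X + C u * (X * (X - 1)) + C v * (X * (X - 1) * (X - 2)) with hQ
  refine ⟨Q, fun n => ?_⟩
  by_cases hn : n < 4
  · have hQ_eval (x : ℚ) : (Q.map (Int.castRingHom ℚ)).eval x =
        a₀ + a₁ * x + u * (x * (x - 1)) + v * (x * (x - 1) * (x - 2)) := by
      simp [hQ]
    interval_cases n <;>
      simp only [fwdDiff_iter_eq_sum_shift, Finset.sum_range_succ, Finset.sum_range_zero]
        at ha₀ ha₁ hu hv ⊢ <;>
      norm_num [hQ_eval, AddSubgroup.mem_zmultiples_iff] at ha₀ ha₁ hu hv ⊢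
    exacts [⟨0, by push_cast; linarith⟩, ⟨0, by push_cast; linarith⟩, ⟨0, by push_cast; linarith⟩,
      ⟨-v, by push_cast; linarith⟩]
  · obtain ⟨n, rfl⟩ := Nat.exists_eq_add_of_le' (not_lt.1 hn)
    have := (hP.sub (preservesSumsOfSigns_map_intCast Q)).fwdDiff_iter_eval_zero_mem_zmultiples n 2
    rwa [show (2 : ℚ) ^ 2 = 4 by norm_num] at this

theorem preservesSumsOfSigns_decomp_mod_four (P : Polynomial ℚ)
    (hP : PreservesSumsOfSigns P) :
    ∃ (Q : Polynomial ℤ) (R : Polynomial ℚ),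
      PreservesSumsOfSigns R ∧
      (∀ m : ℤ, ∃ k : ℤ, R.eval (m : ℚ) = ((4 * k : ℤ) : ℚ)) ∧
      P = Q.map (Int.castRingHom ℚ) + R := by
  obtain ⟨Q, hQ⟩ := hP.exists_fwdDiff_iter_sub_mem_zmultiples_four
  refine ⟨Q, P - Q.map (Int.castRingHom ℚ), hP.sub (preservesSumsOfSigns_map_intCast Q),
    fun m => ?_, by ring⟩
  obtain ⟨k, hk⟩ :=
    AddSubgroup.mem_zmultiples_iff.1 (eval_intCast_mem_of_fwdDiff_iter_mem _ _ hQ m)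
  exact ⟨k, by rw [← hk, zsmul_eq_mul]; push_cast; ring⟩
end

section
/- If φ : ℝ^n → ℤ is a sum of signs, then both functions x ↦ ½φ(x)(φ(x)−1)(φ(x)−2)(φ(x)−3) and x ↦ ½φ(x)(φ(x)−1)(φ(x)−2)(φ(x)−3)(φ(x)−4) take integer values and are themselves sums of signs. -/
lemma sgn_cases (r : ℝ) : sgn r = -1 ∨ sgn r = 0 ∨ sgn r = 1 := by
  unfold sgn; split_ifs <;> simp

lemma sgn_mul (a b : ℝ) : sgn (a * b) = sgn a * sgn b := by
  unfold sgn
  rcases lt_trichotomy a 0 with h | h | h <;> rcases lt_trichotomy b 0 with h' | h' | h' <;>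
    simp [h, h', h.le, h'.le, mul_pos, mul_pos_iff, mul_neg_iff, asymm,
      lt_asymm, not_lt_of_gt, mul_pos_of_neg_of_neg, mul_neg_of_neg_of_pos,
      mul_neg_of_pos_of_neg, le_of_lt]

lemma isSumOfSigns_const {n : ℕ} (c : ℤ) : IsSumOfSigns (fun _ : Fin n → ℝ => c) := by
  refine ⟨c.natAbs, fun _ => MvPolynomial.C (if 0 ≤ c then 1 else -1), fun x => ?_⟩
  rcases le_or_gt 0 c with h | h
  · simp [h, sgn, abs_of_nonneg h]
    try norm_num
  · simp [h.not_ge, sgn, abs_of_neg h]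
    try norm_num

lemma IsSumOfSigns.add {n : ℕ} {φ ψ : (Fin n → ℝ) → ℤ} (hφ : IsSumOfSigns φ)
    (hψ : IsSumOfSigns ψ) : IsSumOfSigns (fun x => φ x + ψ x) := by
  obtain ⟨s, g, hg⟩ := hφ
  obtain ⟨t, h, hh⟩ := hψ
  refine ⟨s + t, Fin.append g h, fun x => ?_⟩
  show φ x + ψ x = _
  rw [Fin.sum_univ_add]
  simp only [Fin.append_left, Fin.append_right]
  rw [hg, hh]

lemma IsSumOfSigns.mul {n : ℕ} {φ ψ : (Fin n → ℝ) → ℤ} (hφ : IsSumOfSigns φ)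
    (hψ : IsSumOfSigns ψ) : IsSumOfSigns (fun x => φ x * ψ x) := by
  obtain ⟨s, g, hg⟩ := hφ
  obtain ⟨t, h, hh⟩ := hψ
  refine ⟨s * t, fun k => g (finProdFinEquiv.symm k).1 * h (finProdFinEquiv.symm k).2,
    fun x => ?_⟩
  show φ x * ψ x = _
  rw [hg, hh, Finset.sum_mul_sum, ← Equiv.sum_comp finProdFinEquiv]
  simp [Fintype.sum_prod_type, map_mul, sgn_mul]

lemma IsSumOfSigns.constMul {n : ℕ} {φ : (Fin n → ℝ) → ℤ} (c : ℤ) (hφ : IsSumOfSigns φ) :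
    IsSumOfSigns (fun x => c * φ x) :=
  (isSumOfSigns_const c).mul hφ

/-- Key lemma: the operator `P₄` applied to a sum of signs, by induction on the number
of signs, using `R(t+σ) = R(t) + 2σ(2t³-9t²+13t-6) + 2σ²(3t²-9t+6)` for `σ ∈ {-1,0,1}`,
where `R(t) = t(t-1)(t-2)(t-3)`. -/
lemma key {n : ℕ} : ∀ (s : ℕ) (g : Fin s → MvPolynomial (Fin n) ℝ),
    ∃ ψ : (Fin n → ℝ) → ℤ, IsSumOfSigns ψ ∧
      ∀ x, 2 * ψ x = (∑ i : Fin s, sgn (MvPolynomial.eval x (g i))) *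
          ((∑ i : Fin s, sgn (MvPolynomial.eval x (g i))) - 1) *
          ((∑ i : Fin s, sgn (MvPolynomial.eval x (g i))) - 2) *
          ((∑ i : Fin s, sgn (MvPolynomial.eval x (g i))) - 3) := by
  intro s
  induction s with
  | zero =>
    intro g
    exact ⟨fun _ => 0, isSumOfSigns_const 0, fun x => by simp⟩
  | succ s IH =>
    intro g
    obtain ⟨ψ', hS', h'⟩ := IH (fun i => g i.castSucc)
    let φ' : (Fin n → ℝ) → ℤ := fun x => ∑ i : Fin s, sgn (MvPolynomial.eval x (g i.castSucc))
    have hφ'S : IsSumOfSigns φ' := ⟨s, fun i => g i.castSucc, fun _ => rfl⟩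
    let σ : (Fin n → ℝ) → ℤ := fun x => sgn (MvPolynomial.eval x (g (Fin.last s)))
    have hσS : IsSumOfSigns σ := ⟨1, fun _ => g (Fin.last s), fun x => by simp [σ]⟩
    refine ⟨fun x => ψ' x + σ x * (2 * (φ' x * φ' x * φ' x) + (-9) * (φ' x * φ' x)
        + 13 * φ' x + (-6)) + σ x * σ x * (3 * (φ' x * φ' x) + (-9) * φ' x + 6), ?_, ?_⟩
    · refine (hS'.add (hσS.mul ?_)).add ((hσS.mul hσS).mul ?_)
      · exact (((((hφ'S.mul hφ'S).mul hφ'S).constMul 2).add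
          ((hφ'S.mul hφ'S).constMul (-9))).add (hφ'S.constMul 13)).add
          (isSumOfSigns_const (-6))
      · exact (((hφ'S.mul hφ'S).constMul 3).add (hφ'S.constMul (-9))).add
          (isSumOfSigns_const 6)
    · intro x
      show 2 * (ψ' x + σ x * (2 * (φ' x * φ' x * φ' x) + (-9) * (φ' x * φ' x)
        + 13 * φ' x + (-6)) + σ x * σ x * (3 * (φ' x * φ' x) + (-9) * φ' x + 6)) = _
      have hsum : (∑ i : Fin (s + 1), sgn (MvPolynomial.eval x (g i))) = φ' x + σ x := by
        rw [Fin.sum_univ_castSucc]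
      rw [hsum]
      have ht : 2 * ψ' x = φ' x * (φ' x - 1) * (φ' x - 2) * (φ' x - 3) := h' x
      have hσc : σ x = -1 ∨ σ x = 0 ∨ σ x = 1 := sgn_cases _
      rcases hσc with hσ | hσ | hσ <;> rw [hσ] <;> linear_combination ht

theorem P4_P5_of_sumOfSigns_isSumOfSigns {n : ℕ} (φ : (Fin n → ℝ) → ℤ)
    (hφ : IsSumOfSigns φ) :
    (∃ ψ : (Fin n → ℝ) → ℤ, IsSumOfSigns ψ ∧
      ∀ x, 2 * ψ x = φ x * (φ x - 1) * (φ x - 2) * (φ x - 3)) ∧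
    (∃ ψ : (Fin n → ℝ) → ℤ, IsSumOfSigns ψ ∧
      ∀ x, 2 * ψ x = φ x * (φ x - 1) * (φ x - 2) * (φ x - 3) * (φ x - 4)) := by
  obtain ⟨s, g, hg⟩ := hφ
  obtain ⟨ψ, hS, hR⟩ := key s g
  have h4 : ∀ x, 2 * ψ x = φ x * (φ x - 1) * (φ x - 2) * (φ x - 3) := by
    intro x
    rw [hg x]
    exact hR x
  refine ⟨⟨ψ, hS, h4⟩, ⟨fun x => φ x * ψ x + (-4) * ψ x, ?_, fun x => ?_⟩⟩
  · exact (IsSumOfSigns.mul ⟨s, g, hg⟩ hS).add (hS.constMul (-4))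
  · linear_combination (φ x - 4) * h4 x
end
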